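/- Let T, V ∈ L(H). Then sp(h₀) is nonempty for every h₀ ∈ H if and only if T(ker V) is a nonnegative subspace of H and H = ker V + [T^#T(ker V)]^{[⊥]} (i.e., T^#T is ker V-complementable). -/

import Mathlib

/-!
With `A = T* J T`, selfadjoint, the Krein form is `[Tx, Ty] = ⟪A x, y⟫` and
`[w, T^#T m] = ⟪A w, m⟫`. Along a line `u + t m` (`t` real) the quadratic form `q x = [Tx, Tx]` is
the real polynomial `q u + 2 t re ⟪A u, m⟫ + t² q m`, so `u` minimises `q` on `u + ker V` iff
`q ≥ 0` on `ker V` and `A u ⊥ ker V`. A minimiser `u ∈ sp(x)` thus yields `x = (x - u) + u`, and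
conversely the second summand `w` of such a decomposition of `h₀` lies in `sp(h₀)`.
-/

open ContinuousLinearMap

noncomputable section

variable {H : Type*} [NormedAddCommGroup H] [InnerProductSpace ℂ H] [CompleteSpace H]

/-- The Krein adjoint `S^# = J ∘ S* ∘ J` of `S ∈ L(H)` on a Krein space with signature
operator `J`. -/
def kadj (J S : H →L[ℂ] H) : H →L[ℂ] H :=
  J ∘L (ContinuousLinearMap.adjoint S) ∘L J

/-- `sp(h)`: the set of solutions of the indefinite spline problem with data `h`, i.e.
those `u ∈ h + ker V` with `[Tu,Tu] ≤ [T(h+z),T(h+z)]` for every `z ∈ ker V`. -/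
def spSet (J T V : H →L[ℂ] H) (h : H) : Set H :=
  {u | (∃ z : H, V z = 0 ∧ u = h + z) ∧
    ∀ z : H, V z = 0 →
      (inner ℂ (J (T u)) (T u) : ℂ).re ≤ (inner ℂ (J (T (h + z))) (T (h + z)) : ℂ).re}

theorem eq_zero_and_nonneg_of_forall_quadratic_nonneg {a b : ℝ}
    (h : ∀ t : ℝ, 0 ≤ 2 * t * a + t ^ 2 * b) : a = 0 ∧ 0 ≤ b := by
  have hdiscrim : discrim b (2 * a) 0 ≤ 0 :=
    discrim_le_zero fun t => by linarith [h t]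
  have ha : a = 0 := by
    rw [discrim] at hdiscrim
    nlinarith [sq_nonneg a]
  refine ⟨ha, ?_⟩
  simpa [ha] using h 1

namespace LinearMap.IsSymmetric

open RCLike

variable {𝕜 E : Type*} [RCLike 𝕜] [NormedAddCommGroup E] [InnerProductSpace 𝕜 E]
  {A : E →ₗ[𝕜] E}

theorem re_inner_add_add_self (hA : A.IsSymmetric) (u m : E) :
    re (inner 𝕜 (A (u + m)) (u + m)) =
      re (inner 𝕜 (A u) u) + 2 * re (inner 𝕜 (A u) m) + re (inner 𝕜 (A m) m) := by
  have hsymm : re (inner 𝕜 (A m) u) = re (inner 𝕜 (A u) m) := by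
    rw [← hA.conj_inner_sym u m, conj_re]
  rw [map_add, inner_add_left, inner_add_right, inner_add_right, map_add, map_add, map_add, hsymm]
  ring

theorem re_inner_real_smul (t : ℝ) (u m : E) :
    re (inner 𝕜 (A u) ((t : 𝕜) • m)) = t * re (inner 𝕜 (A u) m) := by
  rw [inner_smul_right, re_ofReal_mul]

theorem re_inner_real_smul_self (t : ℝ) (m : E) :
    re (inner 𝕜 (A ((t : 𝕜) • m)) ((t : 𝕜) • m)) = t ^ 2 * re (inner 𝕜 (A m) m) := by
  rw [map_smul, inner_smul_left, inner_smul_right, conj_ofReal, ← mul_assoc, ← ofReal_mul,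
    re_ofReal_mul]
  ring

theorem forall_re_inner_self_le_add_iff (hA : A.IsSymmetric) (K : Submodule 𝕜 E) (u : E) :
    (∀ m ∈ K, re (inner 𝕜 (A u) u) ≤ re (inner 𝕜 (A (u + m)) (u + m))) ↔
      (∀ m ∈ K, 0 ≤ re (inner 𝕜 (A m) m)) ∧ ∀ m ∈ K, inner 𝕜 (A u) m = 0 := by
  constructor
  · intro hmin
    have hline (m : E) (hm : m ∈ K) :
        re (inner 𝕜 (A u) m) = 0 ∧ 0 ≤ re (inner 𝕜 (A m) m) := by
      refine eq_zero_and_nonneg_of_forall_quadratic_nonneg fun t => ?_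
      have := hmin _ (K.smul_mem (t : 𝕜) hm)
      rw [hA.re_inner_add_add_self, re_inner_real_smul, re_inner_real_smul_self] at this
      linarith
    refine ⟨fun m hm => (hline m hm).2, fun m hm => RCLike.ext ?_ ?_⟩
    · simpa using (hline m hm).1
    · -- the imaginary part is the real part against `I • m`
      have := (hline _ (K.smul_mem I hm)).1
      rw [inner_smul_right, I_mul_re, neg_eq_zero] at this
      simpa using this
  · rintro ⟨hnonneg, horth⟩ m hm
    rw [hA.re_inner_add_add_self, horth m hm, map_zero]
    linarith [hnonneg m hm]

end LinearMap.IsSymmetric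

section Krein

variable {J T : H →L[ℂ] H}

theorem inner_adjoint_comp_comp_self (x y : H) :
    inner ℂ ((adjoint T ∘L J ∘L T) x) y = inner ℂ (J (T x)) (T y) :=
  adjoint_inner_left T y (J (T x))

theorem inner_apply_kadj_comp_self (hJsa : IsSelfAdjoint J) (hJ2 : J ∘L J = 1) (w m : H) :
    inner ℂ (J w) ((kadj J T ∘L T) m) = inner ℂ (J (T w)) (T m) := by
  have hJJ : ∀ x, J (J x) = x := fun x => by simpa using congr($hJ2 x)
  show inner ℂ (J w) (J (adjoint T (J (T m)))) = _
  rw [← hJsa.adjoint_eq, adjoint_inner_right, hJsa.adjoint_eq, hJJ, adjoint_inner_right,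
    ← adjoint_inner_left J, hJsa.adjoint_eq]

omit [CompleteSpace H] in
theorem mem_spSet_iff_forall_le {V : H →L[ℂ] H} {h u : H} :
    u ∈ spSet J T V h ↔ V (u - h) = 0 ∧
      ∀ m, V m = 0 → (inner ℂ (J (T u)) (T u)).re ≤ (inner ℂ (J (T (u + m))) (T (u + m))).re := by
  constructor
  · rintro ⟨⟨z, hz, rfl⟩, hmin⟩
    refine ⟨by simpa using hz, fun m hm => ?_⟩
    simpa only [add_assoc] using hmin (z + m) (by simp [hz, hm])
  · rintro ⟨hu, hmin⟩
    refine ⟨⟨u - h, hu, by abel⟩, fun z hz => ?_⟩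
    have hz' : V (h + z - u) = 0 := by
      rw [show h + z - u = z - (u - h) by abel, map_sub, hz, hu, sub_zero]
    simpa only [add_sub_cancel] using hmin _ hz'

theorem mem_spSet_iff (hJsa : IsSelfAdjoint J) {V : H →L[ℂ] H} {h u : H} :
    u ∈ spSet J T V h ↔ V (u - h) = 0 ∧ (∀ m, V m = 0 → 0 ≤ (inner ℂ (J (T m)) (T m)).re) ∧
      ∀ m, V m = 0 → inner ℂ (J (T u)) (T m) = 0 := by
  have hA := (hJsa.adjoint_conj T).isSymmetric
  rw [mem_spSet_iff_forall_le]
  simpa only [LinearMap.mem_ker, ContinuousLinearMap.coe_coe, inner_adjoint_comp_comp_self,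
    RCLike.re_to_complex]
    using and_congr_right' (hA.forall_re_inner_self_le_add_iff (V : H →ₗ[ℂ] H).ker u)

end Krein

theorem stmt13_general
    (J : H →L[ℂ] H) (hJsa : IsSelfAdjoint J) (hJ2 : J ∘L J = 1)
    (T V : H →L[ℂ] H) :
    (∀ h₀ : H, (spSet J T V h₀).Nonempty) ↔
      ((∀ z : H, V z = 0 → 0 ≤ (inner ℂ (J (T z)) (T z) : ℂ).re) ∧
        ∀ x : H, ∃ z w : H, V z = 0 ∧
          (∀ m : H, V m = 0 → (inner ℂ (J w) ((kadj J T ∘L T) m) : ℂ) = 0) ∧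
          x = z + w) := by
  constructor
  · intro hsp
    obtain ⟨-, hnonneg, -⟩ := (mem_spSet_iff hJsa).1 (hsp 0).some_mem
    refine ⟨hnonneg, fun x => ?_⟩
    obtain ⟨u, hu⟩ := hsp x
    obtain ⟨hux, -, horth⟩ := (mem_spSet_iff hJsa).1 hu
    refine ⟨x - u, u, by rw [← neg_sub, map_neg, hux, neg_zero], fun m hm => ?_, by abel⟩
    rw [inner_apply_kadj_comp_self hJsa hJ2, horth m hm]
  · rintro ⟨hnonneg, hcompl⟩ h₀
    obtain ⟨z, w, hz, hw, rfl⟩ := hcompl h₀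
    refine ⟨w, (mem_spSet_iff hJsa).2 ⟨by simp [hz], hnonneg, fun m hm => ?_⟩⟩
    rw [← inner_apply_kadj_comp_self hJsa hJ2, hw m hm]

/-- `sp(h₀)` is nonempty for every `h₀ ∈ H` iff `T(ker V)` is a nonnegative
subspace of `H` and `H = ker V + [T^#T(ker V)]^{[⊥]}` (`T^#T` is `ker V`-complementable). -/
theorem stmt13
    [TopologicalSpace.SeparableSpace H]
    (J : H →L[ℂ] H) (hJsa : IsSelfAdjoint J) (hJ2 : J ∘L J = 1)
    (T V : H →L[ℂ] H) :
    (∀ h₀ : H, (spSet J T V h₀).Nonempty) ↔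
      ((∀ z : H, V z = 0 → 0 ≤ (inner ℂ (J (T z)) (T z) : ℂ).re) ∧
        ∀ x : H, ∃ z w : H, V z = 0 ∧
          (∀ m : H, V m = 0 → (inner ℂ (J w) ((kadj J T ∘L T) m) : ℂ) = 0) ∧
          x = z + w) :=
  stmt13_general J hJsa hJ2 T V
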